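/- arXiv:2504.02565 — 3 statements merged into one kernel-verified Lean document; each statement's English description precedes it below -/
import Mathlib

section
/- Let γ_Δ, γ_F, γ_M ≥ 0 be real numbers with γ_M < γ_Δ^{-1} (γ_F + 1)^{-1} (interpreting the right-hand side as +∞ when γ_Δ = 0). Suppose nonnegative reals W, Ŵ, U, A satisfy: (i) Ŵ ≤ γ_Δ (γ_F W + γ_F U + U) + W, and (ii) U ≤ γ_M Ŵ + A. Then (1 − γ_Δ γ_M (γ_F + 1)) > 0 and Ŵ ≤ [(γ_Δ γ_F + 1) W + γ_Δ (γ_F + 1) A] / (1 − γ_Δ γ_M (γ_F + 1)). In particular, Ŵ is finite whenever W and A are finite. -/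
/-- Small-gain inequality (Proposition 2): under the gain condition
`γ_M < γ_Δ⁻¹ (γ_F + 1)⁻¹` (read as `+∞` when `γ_Δ = 0`), the reconstructed
disturbance norm `What` is bounded. -/
theorem small_gain_bound
    (γΔ γF γM : ℝ) (hγΔ : 0 ≤ γΔ) (hγF : 0 ≤ γF) (hγM : 0 ≤ γM)
    (hgain : γΔ = 0 ∨ γM < γΔ⁻¹ * (γF + 1)⁻¹)
    (W What U A : ℝ) (hW : 0 ≤ W) (hWhat : 0 ≤ What) (hU : 0 ≤ U) (hA : 0 ≤ A)
    (h1 : What ≤ γΔ * (γF * W + γF * U + U) + W)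
    (h2 : U ≤ γM * What + A) :
    0 < 1 - γΔ * γM * (γF + 1) ∧
      What ≤ ((γΔ * γF + 1) * W + γΔ * (γF + 1) * A) / (1 - γΔ * γM * (γF + 1)) := by
  have hpos : 0 < 1 - γΔ * γM * (γF + 1) := by
    rcases hgain with h | h
    · simp [h]
    · rcases eq_or_lt_of_le hγΔ with h0 | h0
      · simp [← h0]
      · have hF : (0:ℝ) < γF + 1 := by linarith
        have e1 : γΔ * γΔ⁻¹ = 1 := mul_inv_cancel₀ (ne_of_gt h0)
        have e2 : (γF + 1) * (γF + 1)⁻¹ = 1 := mul_inv_cancel₀ (ne_of_gt hF)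
        nlinarith [mul_lt_mul_of_pos_left h (mul_pos h0 hF)]
  refine ⟨hpos, ?_⟩
  rw [le_div_iff₀ hpos]
  nlinarith [mul_le_mul_of_nonneg_left h2 (mul_nonneg hγΔ (by linarith : (0:ℝ) ≤ γF + 1))]
end

section
/- Suppose M : ℓ_p^n → ℓ_p^m is a causal operator with M(v) ∈ ℓ_p^m for all v ∈ ℓ_p^n, a : ℝ^n → ℓ_p^m assigns to each initial state an ℓ_p feed-forward sequence, and D_t : (ℝ^n)^{t+1} → ℝ^m satisfies |D_t(x_{t:0})| ≤ 1 for all t and all arguments. Assume the closed-loop plant operator F : (u, w) ↦ x maps ℓ_p^m × ℓ_p^n into ℓ_p^n. Then for every disturbance w ∈ ℓ_p^n and initial state x_0, the MAD policy u_t = |M_t(w_{t:0}) + a_t(x_0)| · D_t(x_{t:0}) together with x = F(u, w) satisfies u ∈ ℓ_p^m and x ∈ ℓ_p^n; i.e., the closed-loop map w ↦ (x, u) is ℓ_p-stable. -/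
/-- Sufficiency direction of Theorem 2: every MAD policy built from an
ℓ_p-stable magnitude operator `M`, an ℓ_p feed-forward `a`, and a
norm-bounded direction term `D`, yields ℓ_p closed-loop signals for an
open-loop ℓ_p-stable plant `F`. -/
theorem mad_policy_stabilizing
    (n m : ℕ) (p : ℝ) (hp : 1 ≤ p)
    (M : (ℕ → EuclideanSpace ℝ (Fin n)) → (ℕ → EuclideanSpace ℝ (Fin m)))
    (hMcausal : ∀ v v' : ℕ → EuclideanSpace ℝ (Fin n), ∀ t,
      (∀ k ≤ t, v k = v' k) → M v t = M v' t)
    (hMstable : ∀ v : ℕ → EuclideanSpace ℝ (Fin n),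
      (Summable fun t => ‖v t‖ ^ p) → Summable fun t => ‖M v t‖ ^ p)
    (a : EuclideanSpace ℝ (Fin n) → ℕ → EuclideanSpace ℝ (Fin m))
    (ha : ∀ x0, Summable fun t => ‖a x0 t‖ ^ p)
    (D : (t : ℕ) → (Fin (t + 1) → EuclideanSpace ℝ (Fin n)) →
      EuclideanSpace ℝ (Fin m))
    (hD : ∀ t z, ‖D t z‖ ≤ 1)
    (F : (ℕ → EuclideanSpace ℝ (Fin m)) × (ℕ → EuclideanSpace ℝ (Fin n)) →
      (ℕ → EuclideanSpace ℝ (Fin n)))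
    (hF : ∀ u w, (Summable fun t => ‖u t‖ ^ p) →
      (Summable fun t => ‖w t‖ ^ p) → Summable fun t => ‖F (u, w) t‖ ^ p)
    (w : ℕ → EuclideanSpace ℝ (Fin n)) (hw : Summable fun t => ‖w t‖ ^ p)
    (x0 : EuclideanSpace ℝ (Fin n))
    (u : ℕ → EuclideanSpace ℝ (Fin m)) (x : ℕ → EuclideanSpace ℝ (Fin n))
    (hx : x = F (u, w))
    (hu : ∀ t, u t = ‖M w t + a x0 t‖ • D t (fun i => x i.val)) :
    (Summable fun t => ‖u t‖ ^ p) ∧ (Summable fun t => ‖x t‖ ^ p) := by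
  have hp0 : 0 < p := lt_of_lt_of_le one_pos hp
  have hsum : Summable fun t => 2 ^ p * (‖M w t‖ ^ p + ‖a x0 t‖ ^ p) :=
    ((hMstable w hw).add (ha x0)).mul_left _
  have husum : Summable fun t => ‖u t‖ ^ p := by
    refine Summable.of_nonneg_of_le (fun t => Real.rpow_nonneg (norm_nonneg _) p)
      (fun t => ?_) hsum
    have h1 : ‖u t‖ ≤ ‖M w t‖ + ‖a x0 t‖ := by
      rw [hu t, norm_smul, Real.norm_eq_abs, abs_norm]
      calc ‖M w t + a x0 t‖ * ‖D t fun i => x i.val‖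
          ≤ ‖M w t + a x0 t‖ * 1 := by
            exact mul_le_mul_of_nonneg_left (hD _ _) (norm_nonneg _)
        _ = ‖M w t + a x0 t‖ := mul_one _
        _ ≤ ‖M w t‖ + ‖a x0 t‖ := norm_add_le _ _
    have h2 : ‖M w t‖ + ‖a x0 t‖ ≤ 2 * max ‖M w t‖ ‖a x0 t‖ := by
      rw [two_mul]
      exact add_le_add (le_max_left _ _) (le_max_right _ _)
    calc ‖u t‖ ^ p ≤ (2 * max ‖M w t‖ ‖a x0 t‖) ^ p :=
          Real.rpow_le_rpow (norm_nonneg _) (h1.trans h2) hp0.le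
      _ = 2 ^ p * max ‖M w t‖ ‖a x0 t‖ ^ p := by
          rw [Real.mul_rpow (by norm_num) (le_max_of_le_left (norm_nonneg _))]
      _ ≤ 2 ^ p * (‖M w t‖ ^ p + ‖a x0 t‖ ^ p) := by
          refine mul_le_mul_of_nonneg_left ?_ (Real.rpow_nonneg (by norm_num) p)
          rcases max_cases ‖M w t‖ ‖a x0 t‖ with ⟨h, _⟩ | ⟨h, _⟩ <;> rw [h]
          · exact le_add_of_nonneg_right (Real.rpow_nonneg (norm_nonneg _) p)
          · exact le_add_of_nonneg_left (Real.rpow_nonneg (norm_nonneg _) p)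
  exact ⟨husum, hx ▸ hF u w husum hw⟩
end

section
/- Let Λ be a diagonal complex d×d matrix with all diagonal entries of modulus strictly less than 1, B and C complex matrices, D, F real matrices, and g : ℝ^k → ℝ^m a function that is Lipschitz with g(0) = 0. Consider the system ξ_{t+1} = Λ ξ_t + B v_t, y_t = g(Re(C ξ_t) + D v_t) + F v_t with ξ_0 = 0. Then the operator v ↦ y maps ℓ_2 into ℓ_2 and has finite ℓ_2 gain. -/
open Finset in
lemma my_rpow_two (x : ℝ) : x ^ (2 : ℝ) = x ^ 2 := by
  rw [show (2:ℝ) = ((2:ℕ):ℝ) by norm_num, Real.rpow_natCast]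

lemma my_half_rpow (x : ℝ) : x ^ (1/2 : ℝ) = Real.sqrt x := (Real.sqrt_eq_rpow x).symm

open Finset in
lemma piLp_norm_le_mul {ι : Type*} [Fintype ι] {α β : Type*} [SeminormedAddCommGroup α]
    [SeminormedAddCommGroup β] {c : ℝ} (hc : 0 ≤ c)
    (x : PiLp 2 (fun _ : ι => α)) (y : PiLp 2 (fun _ : ι => β))
    (h : ∀ i, ‖x i‖ ≤ c * ‖y i‖) : ‖x‖ ≤ c * ‖y‖ := by
  have h2 : 0 < (2 : ENNReal).toReal := by norm_num
  rw [PiLp.norm_eq_sum h2, PiLp.norm_eq_sum h2]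
  simp only [ENNReal.toReal_ofNat, my_rpow_two, my_half_rpow]
  calc Real.sqrt (∑ i, ‖x i‖ ^ 2)
      ≤ Real.sqrt (∑ i, (c * ‖y i‖) ^ 2) := by
        apply Real.sqrt_le_sqrt
        apply Finset.sum_le_sum
        intro i _
        exact pow_le_pow_left₀ (norm_nonneg _) (h i) 2
    _ = c * Real.sqrt (∑ i, ‖y i‖ ^ 2) := by
        simp_rw [mul_pow, ← Finset.mul_sum]
        rw [Real.sqrt_mul (sq_nonneg c), Real.sqrt_sq hc]

open Finset in
lemma conv_l2 {ρ : ℝ} (hρ0 : 0 ≤ ρ) (hρ1 : ρ < 1) (X : ℕ → ℝ) (hX0 : ∀ t, 0 ≤ X t)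
    (hX : Summable (fun t => X t ^ 2)) :
    Summable (fun t => (∑ s ∈ Finset.range t, ρ ^ (t - 1 - s) * X s) ^ 2) ∧
      (∑' t, (∑ s ∈ Finset.range t, ρ ^ (t - 1 - s) * X s) ^ 2) ≤
        (1 - ρ)⁻¹ ^ 2 * ∑' t, X t ^ 2 := by
  set w : ℕ → ℝ := fun t => ∑ s ∈ Finset.range t, ρ ^ (t - 1 - s) * X s with hw
  have hgeom : Summable (fun n : ℕ => ρ ^ n) := summable_geometric_of_lt_one hρ0 hρ1
  have hgs : ∀ (s : Finset ℕ), ∑ j ∈ s, ρ ^ j ≤ (1 - ρ)⁻¹ := by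
    intro s
    calc ∑ j ∈ s, ρ ^ j ≤ ∑' j : ℕ, ρ ^ j :=
          Summable.sum_le_tsum s (fun j _ => pow_nonneg hρ0 j) hgeom
      _ = (1 - ρ)⁻¹ := tsum_geometric_of_lt_one hρ0 hρ1
  -- pointwise Cauchy-Schwarz bound
  have hcs : ∀ t, w t ^ 2 ≤ (1 - ρ)⁻¹ * ∑ s ∈ Finset.range t, ρ ^ (t - 1 - s) * X s ^ 2 := by
    intro t
    have h1 : w t ^ 2 ≤ (∑ s ∈ Finset.range t, ρ ^ (t - 1 - s)) *
        ∑ s ∈ Finset.range t, ρ ^ (t - 1 - s) * X s ^ 2 := by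
      have := Finset.sum_mul_sq_le_sq_mul_sq (Finset.range t)
        (fun s => Real.sqrt (ρ ^ (t - 1 - s))) (fun s => Real.sqrt (ρ ^ (t - 1 - s)) * X s)
      calc w t ^ 2 = (∑ s ∈ Finset.range t,
            Real.sqrt (ρ ^ (t - 1 - s)) * (Real.sqrt (ρ ^ (t - 1 - s)) * X s)) ^ 2 := by
            congr 1; apply Finset.sum_congr rfl; intro s _
            rw [← mul_assoc, Real.mul_self_sqrt (pow_nonneg hρ0 _)]
        _ ≤ (∑ s ∈ Finset.range t, Real.sqrt (ρ ^ (t - 1 - s)) ^ 2) *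
            ∑ s ∈ Finset.range t, (Real.sqrt (ρ ^ (t - 1 - s)) * X s) ^ 2 := this
        _ = (∑ s ∈ Finset.range t, ρ ^ (t - 1 - s)) *
            ∑ s ∈ Finset.range t, ρ ^ (t - 1 - s) * X s ^ 2 := by
            congr 1
            · apply Finset.sum_congr rfl; intro s _; exact Real.sq_sqrt (pow_nonneg hρ0 _)
            · apply Finset.sum_congr rfl; intro s _
              rw [mul_pow, Real.sq_sqrt (pow_nonneg hρ0 _)]
    refine h1.trans (mul_le_mul_of_nonneg_right ?_ ?_)
    · rw [Finset.sum_range_reflect (fun j => ρ ^ j) t]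
      exact hgs _
    · exact Finset.sum_nonneg fun s _ => mul_nonneg (pow_nonneg hρ0 _) (sq_nonneg _)
  have hinner : ∀ s t : ℕ, 0 ≤ ρ ^ (t - 1 - s) * X s ^ 2 :=
    fun s t => mul_nonneg (pow_nonneg hρ0 _) (sq_nonneg _)
  -- partial-sum bound for the double sum
  have hdouble : ∀ N, ∑ t ∈ Finset.range N, ∑ s ∈ Finset.range t, ρ ^ (t - 1 - s) * X s ^ 2 ≤
      (1 - ρ)⁻¹ * ∑' t, X t ^ 2 := by
    intro N
    have swap : ∑ t ∈ Finset.range N, ∑ s ∈ Finset.range t, ρ ^ (t - 1 - s) * X s ^ 2 =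
        ∑ s ∈ Finset.range N, ∑ t ∈ Finset.Ico (s + 1) N, ρ ^ (t - 1 - s) * X s ^ 2 := by
      simp_rw [Finset.range_eq_Ico]; rw [← Finset.sum_Ico_Ico_comm' 0 N (fun s t => ρ ^ (t - 1 - s) * X s ^ 2)]
    rw [swap]
    calc ∑ s ∈ Finset.range N, ∑ t ∈ Finset.Ico (s + 1) N, ρ ^ (t - 1 - s) * X s ^ 2
        ≤ ∑ s ∈ Finset.range N, (1 - ρ)⁻¹ * X s ^ 2 := by
          apply Finset.sum_le_sum; intro s _
          rw [← Finset.sum_mul]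
          apply mul_le_mul_of_nonneg_right _ (sq_nonneg _)
          calc ∑ t ∈ Finset.Ico (s + 1) N, ρ ^ (t - 1 - s)
              = ∑ j ∈ Finset.range (N - (s + 1)), ρ ^ j := by
                rw [Finset.sum_Ico_eq_sum_range]
                apply Finset.sum_congr rfl; intro j _
                have : s + 1 + j - 1 - s = j := by omega
                rw [this]
            _ ≤ (1 - ρ)⁻¹ := hgs _
      _ = (1 - ρ)⁻¹ * ∑ s ∈ Finset.range N, X s ^ 2 := by rw [← Finset.mul_sum]
      _ ≤ (1 - ρ)⁻¹ * ∑' t, X t ^ 2 := by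
          apply mul_le_mul_of_nonneg_left _ (inv_nonneg.2 (by linarith))
          exact Summable.sum_le_tsum _ (fun s _ => sq_nonneg _) hX
  have hbound : ∀ N, ∑ t ∈ Finset.range N, w t ^ 2 ≤ (1 - ρ)⁻¹ ^ 2 * ∑' t, X t ^ 2 := by
    intro N
    calc ∑ t ∈ Finset.range N, w t ^ 2
        ≤ ∑ t ∈ Finset.range N, (1 - ρ)⁻¹ *
            ∑ s ∈ Finset.range t, ρ ^ (t - 1 - s) * X s ^ 2 :=
          Finset.sum_le_sum fun t _ => hcs t
      _ = (1 - ρ)⁻¹ * ∑ t ∈ Finset.range N, ∑ s ∈ Finset.range t, ρ ^ (t - 1 - s) * X s ^ 2 := by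
          rw [← Finset.mul_sum]
      _ ≤ (1 - ρ)⁻¹ * ((1 - ρ)⁻¹ * ∑' t, X t ^ 2) := by
          apply mul_le_mul_of_nonneg_left (hdouble N) (inv_nonneg.2 (by linarith))
      _ = (1 - ρ)⁻¹ ^ 2 * ∑' t, X t ^ 2 := by ring
  have hw0 : ∀ t, 0 ≤ w t ^ 2 := fun t => sq_nonneg _
  exact ⟨summable_of_sum_range_le hw0 hbound,
    Real.tsum_le_of_sum_range_le hw0 hbound⟩


/-- The full LRU-based parametrization (linear diagonal recurrence with a
Lipschitz nonlinear readout vanishing at zero) defines an ℓ_2-stable operator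
with finite ℓ_2 gain. -/
theorem lru_readout_finite_l2_gain
    (d q k m : ℕ) (lam : Fin d → ℂ) (hlam : ∀ i, ‖lam i‖ < 1)
    (B : EuclideanSpace ℝ (Fin q) →L[ℝ] EuclideanSpace ℂ (Fin d))
    (C : EuclideanSpace ℂ (Fin d) →L[ℝ] EuclideanSpace ℂ (Fin k))
    (Dm : EuclideanSpace ℝ (Fin q) →L[ℝ] EuclideanSpace ℝ (Fin k))
    (Fm : EuclideanSpace ℝ (Fin q) →L[ℝ] EuclideanSpace ℝ (Fin m))
    (K : NNReal) (g : EuclideanSpace ℝ (Fin k) → EuclideanSpace ℝ (Fin m))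
    (hg : LipschitzWith K g) (hg0 : g 0 = 0) :
    ∃ γ : ℝ, 0 ≤ γ ∧
      ∀ (v : ℕ → EuclideanSpace ℝ (Fin q))
        (ξ : ℕ → EuclideanSpace ℂ (Fin d))
        (y : ℕ → EuclideanSpace ℝ (Fin m)),
        ξ 0 = 0 →
        (∀ t, ∀ i, ξ (t + 1) i = lam i * ξ t i + B (v t) i) →
        (∀ t, y t =
          g (((WithLp.equiv 2 (Fin k → ℝ)).symm fun i => (C (ξ t) i).re) + Dm (v t))
            + Fm (v t)) →
        (Summable fun t => ‖v t‖ ^ (2 : ℝ)) →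
        (Summable fun t => ‖y t‖ ^ (2 : ℝ)) ∧
          (∑' t, ‖y t‖ ^ (2 : ℝ)) ^ (1 / 2 : ℝ) ≤
            γ * (∑' t, ‖v t‖ ^ (2 : ℝ)) ^ (1 / 2 : ℝ) := by
  classical
  haveI : Fact ((1 : ENNReal) ≤ 2) := ⟨by norm_num⟩
  set ρnn : NNReal := Finset.univ.sup (fun i : Fin d => ‖lam i‖₊) with hρnn
  set ρ : ℝ := (ρnn : ℝ) with hρdef
  have hρ0 : 0 ≤ ρ := ρnn.coe_nonneg
  have hρ1 : ρ < 1 := by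
    have h1 : ρnn < 1 := by
      rw [hρnn]
      apply Finset.sup_lt_iff (by norm_num : (⊥ : NNReal) < 1) |>.2
      intro i _
      have := hlam i
      exact_mod_cast this
    exact_mod_cast h1
  have hlamρ : ∀ i, ‖lam i‖ ≤ ρ := by
    intro i
    have h1 : ‖lam i‖₊ ≤ ρnn := by
      rw [hρnn]; exact Finset.le_sup (f := fun j : Fin d => ‖lam j‖₊) (Finset.mem_univ i)
    exact_mod_cast h1
  have h1ρ : 0 < 1 - ρ := by linarith
  set a : ℝ := (K : ℝ) * ‖C‖ * ‖B‖ with ha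
  set b : ℝ := (K : ℝ) * ‖Dm‖ + ‖Fm‖ with hb
  have ha0 : 0 ≤ a := by positivity
  have hb0 : 0 ≤ b := by positivity
  refine ⟨a * (1 - ρ)⁻¹ + b, by positivity, ?_⟩
  intro v ξ y hξ0 hrec hy hv
  set X : ℕ → ℝ := fun t => ‖v t‖ with hX'
  have hX0 : ∀ t, 0 ≤ X t := fun t => norm_nonneg _
  have hX : Summable fun t => X t ^ 2 := by
    have : (fun t => ‖v t‖ ^ (2 : ℝ)) = fun t => X t ^ 2 := by
      funext t; rw [my_rpow_two]
    rwa [this] at hv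
  set w : ℕ → ℝ := fun t => ∑ s ∈ Finset.range t, ρ ^ (t - 1 - s) * X s with hwdef
  have hw0 : ∀ t, 0 ≤ w t :=
    fun t => Finset.sum_nonneg fun s _ => mul_nonneg (pow_nonneg hρ0 _) (hX0 s)
  obtain ⟨hwsum, hwbound⟩ := conv_l2 hρ0 hρ1 X hX0 hX
  -- explicit formula for ξ
  have hform : ∀ t, ∀ i, ξ t i = ∑ s ∈ Finset.range t, lam i ^ (t - 1 - s) * B (v s) i := by
    intro t
    induction t with
    | zero => intro i; simp [hξ0]
    | succ t ih =>
      intro i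
      rw [hrec t i, ih i, Finset.mul_sum, Finset.sum_range_succ]
      congr 1
      · apply Finset.sum_congr rfl
        intro s hs
        rw [← mul_assoc, ← pow_succ']
        congr 2
        have := Finset.mem_range.1 hs
        omega
      · have : t + 1 - 1 - t = 0 := by omega
        rw [this, pow_zero, one_mul]
  -- ξ as a sum of vectors
  have hξsum : ∀ t, ξ t = ∑ s ∈ Finset.range t,
      ((WithLp.equiv 2 (Fin d → ℂ)).symm fun i => lam i ^ (t - 1 - s) * B (v s) i) := by
    intro t
    ext i
    rw [hform t i]
    simp [WithLp.equiv_symm_apply, PiLp.toLp_apply]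
  have hξnorm : ∀ t, ‖ξ t‖ ≤ ‖B‖ * w t := by
    intro t
    rw [hξsum t]
    calc ‖∑ s ∈ Finset.range t,
          ((WithLp.equiv 2 (Fin d → ℂ)).symm fun i => lam i ^ (t - 1 - s) * B (v s) i)‖
        ≤ ∑ s ∈ Finset.range t,
          ‖((WithLp.equiv 2 (Fin d → ℂ)).symm fun i => lam i ^ (t - 1 - s) * B (v s) i)‖ :=
          norm_sum_le _ _
      _ ≤ ∑ s ∈ Finset.range t, ρ ^ (t - 1 - s) * (‖B‖ * X s) := by
          apply Finset.sum_le_sum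
          intro s _
          have step1 : ‖((WithLp.equiv 2 (Fin d → ℂ)).symm
              fun i => lam i ^ (t - 1 - s) * B (v s) i)‖ ≤ ρ ^ (t - 1 - s) * ‖B (v s)‖ := by
            apply piLp_norm_le_mul (pow_nonneg hρ0 _)
            intro i
            rw [WithLp.equiv_symm_apply, PiLp.toLp_apply, norm_mul, norm_pow]
            exact mul_le_mul_of_nonneg_right
              (pow_le_pow_left₀ (norm_nonneg _) (hlamρ i) _) (norm_nonneg _)
          refine step1.trans ?_
          exact mul_le_mul_of_nonneg_left (B.le_opNorm (v s)) (pow_nonneg hρ0 _)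
      _ = ‖B‖ * w t := by
          rw [hwdef, Finset.mul_sum]
          apply Finset.sum_congr rfl
          intro s _
          ring
  -- pointwise bound on y
  have hynorm : ∀ t, ‖y t‖ ≤ a * w t + b * X t := by
    intro t
    rw [hy t]
    set P : EuclideanSpace ℝ (Fin k) :=
      ((WithLp.equiv 2 (Fin k → ℝ)).symm fun i => (C (ξ t) i).re) with hP
    have hPle : ‖P‖ ≤ ‖C (ξ t)‖ := by
      have := piLp_norm_le_mul (c := 1) zero_le_one P (C (ξ t)) ?_
      · simpa using this
      · intro i
        rw [one_mul, hP, WithLp.equiv_symm_apply, PiLp.toLp_apply]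
        rw [Real.norm_eq_abs]
        exact Complex.abs_re_le_norm _
    have hgz : ∀ z : EuclideanSpace ℝ (Fin k), ‖g z‖ ≤ (K : ℝ) * ‖z‖ := by
      intro z
      have h1 := hg.dist_le_mul z 0
      rwa [hg0, dist_zero_right, dist_zero_right] at h1
    calc ‖g (P + Dm (v t)) + Fm (v t)‖
        ≤ ‖g (P + Dm (v t))‖ + ‖Fm (v t)‖ := norm_add_le _ _
      _ ≤ (K : ℝ) * ‖P + Dm (v t)‖ + ‖Fm‖ * X t :=
          add_le_add (hgz _) (Fm.le_opNorm (v t))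
      _ ≤ (K : ℝ) * (‖C (ξ t)‖ + ‖Dm‖ * X t) + ‖Fm‖ * X t := by
          apply add_le_add_left
          apply mul_le_mul_of_nonneg_left _ K.coe_nonneg
          refine (norm_add_le _ _).trans (add_le_add hPle (Dm.le_opNorm (v t)))
      _ ≤ (K : ℝ) * (‖C‖ * (‖B‖ * w t) + ‖Dm‖ * X t) + ‖Fm‖ * X t := by
          apply add_le_add_left
          apply mul_le_mul_of_nonneg_left _ K.coe_nonneg
          apply add_le_add_left
          exact (C.le_opNorm (ξ t)).trans
            (mul_le_mul_of_nonneg_left (hξnorm t) (norm_nonneg _))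
      _ = a * w t + b * X t := by rw [ha, hb]; ring
  -- lp space machinery
  have toReal2 : (2 : ENNReal).toReal = 2 := by norm_num
  have hmem : ∀ (f : ℕ → ℝ), (∀ t, 0 ≤ f t) → Summable (fun t => f t ^ 2) →
      Memℓp f (2 : ENNReal) := by
    intro f hf0 hf
    apply memℓp_gen
    have h2 : (fun t => ‖f t‖ ^ (2 : ENNReal).toReal) = fun t => f t ^ 2 := by
      funext t
      rw [toReal2, Real.norm_of_nonneg (hf0 t), my_rpow_two]
    rwa [h2]
  set W : lp (fun _ : ℕ => ℝ) 2 := ⟨w, hmem w hw0 hwsum⟩ with hW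
  set V : lp (fun _ : ℕ => ℝ) 2 := ⟨X, hmem X hX0 hX⟩ with hV
  set U : lp (fun _ : ℕ => ℝ) 2 := a • W + b • V with hU
  have hUapp : ∀ t, (U : ∀ _ : ℕ, ℝ) t = a * w t + b * X t := by
    intro t
    rw [hU]
    simp only [lp.coeFn_add, lp.coeFn_smul, Pi.add_apply, Pi.smul_apply, smul_eq_mul]
    rfl
  have hUsum : Summable fun t => (a * w t + b * X t) ^ 2 := by
    have h1 := (memℓp_gen_iff (p := (2 : ENNReal)) (by rw [toReal2]; norm_num)).1 U.property
    have h2 : (fun t => ‖(U : ∀ _ : ℕ, ℝ) t‖ ^ (2 : ENNReal).toReal)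
        = fun t => (a * w t + b * X t) ^ 2 := by
      funext t
      rw [toReal2, hUapp t, Real.norm_of_nonneg (by positivity), my_rpow_two]
    rwa [h2] at h1
  have hysum : Summable fun t => ‖y t‖ ^ 2 := by
    apply Summable.of_nonneg_of_le (fun t => sq_nonneg _) _ hUsum
    intro t
    exact pow_le_pow_left₀ (norm_nonneg _) (hynorm t) 2
  have hnormU : ‖U‖ = Real.sqrt (∑' t, (a * w t + b * X t) ^ 2) := by
    rw [lp.norm_eq_tsum_rpow (by rw [toReal2]; norm_num) U, toReal2, my_half_rpow]
    congr 1
    apply tsum_congr; intro t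
    rw [hUapp t, Real.norm_of_nonneg (by positivity), my_rpow_two]
  have hnormW : ‖W‖ = Real.sqrt (∑' t, w t ^ 2) := by
    rw [lp.norm_eq_tsum_rpow (by rw [toReal2]; norm_num) W, toReal2, my_half_rpow]
    congr 1
    apply tsum_congr; intro t
    rw [show ((W : ∀ _ : ℕ, ℝ) t) = w t from rfl, Real.norm_of_nonneg (hw0 t), my_rpow_two]
  have hnormV : ‖V‖ = Real.sqrt (∑' t, X t ^ 2) := by
    rw [lp.norm_eq_tsum_rpow (by rw [toReal2]; norm_num) V, toReal2, my_half_rpow]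
    congr 1
    apply tsum_congr; intro t
    rw [show ((V : ∀ _ : ℕ, ℝ) t) = X t from rfl, Real.norm_of_nonneg (hX0 t), my_rpow_two]
  have goal2 : Real.sqrt (∑' t, ‖y t‖ ^ 2) ≤
      (a * (1 - ρ)⁻¹ + b) * Real.sqrt (∑' t, X t ^ 2) := by
    have s1 : Real.sqrt (∑' t, ‖y t‖ ^ 2) ≤
        Real.sqrt (∑' t, (a * w t + b * X t) ^ 2) := by
      apply Real.sqrt_le_sqrt
      exact Summable.tsum_le_tsum (fun t => pow_le_pow_left₀ (norm_nonneg _) (hynorm t) 2) hysum hUsum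
    have s2 : Real.sqrt (∑' t, (a * w t + b * X t) ^ 2) ≤
        a * Real.sqrt (∑' t, w t ^ 2) + b * Real.sqrt (∑' t, X t ^ 2) := by
      rw [← hnormU, ← hnormW, ← hnormV]
      calc ‖U‖ ≤ ‖a • W‖ + ‖b • V‖ := norm_add_le _ _
        _ = a * ‖W‖ + b * ‖V‖ := by
            rw [norm_smul, norm_smul, Real.norm_of_nonneg ha0, Real.norm_of_nonneg hb0]
    have s3 : Real.sqrt (∑' t, w t ^ 2) ≤ (1 - ρ)⁻¹ * Real.sqrt (∑' t, X t ^ 2) := by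
      refine (Real.sqrt_le_sqrt hwbound).trans ?_
      rw [Real.sqrt_mul (sq_nonneg _), Real.sqrt_sq (inv_nonneg.2 h1ρ.le)]
    calc Real.sqrt (∑' t, ‖y t‖ ^ 2)
        ≤ a * Real.sqrt (∑' t, w t ^ 2) + b * Real.sqrt (∑' t, X t ^ 2) := s1.trans s2
      _ ≤ a * ((1 - ρ)⁻¹ * Real.sqrt (∑' t, X t ^ 2)) + b * Real.sqrt (∑' t, X t ^ 2) :=
          add_le_add_left (mul_le_mul_of_nonneg_left s3 ha0) _
      _ = (a * (1 - ρ)⁻¹ + b) * Real.sqrt (∑' t, X t ^ 2) := by ring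
  have e1 : (∑' t, ‖y t‖ ^ (2 : ℝ)) = ∑' t, ‖y t‖ ^ 2 := tsum_congr fun t => my_rpow_two _
  have e2 : (∑' t, ‖v t‖ ^ (2 : ℝ)) = ∑' t, X t ^ 2 := tsum_congr fun t => my_rpow_two _
  constructor
  · have h2 : (fun t => ‖y t‖ ^ (2 : ℝ)) = fun t => ‖y t‖ ^ 2 := by
      funext t; rw [my_rpow_two]
    rw [h2]; exact hysum
  · rw [e1, e2, my_half_rpow, my_half_rpow]
    exact goal2
end
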